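/- arXiv:2503.04517 — 2 statements merged into one kernel-verified Lean document; each statement's English description precedes it below -/
import Mathlib

section
/- Let |ψ⟩ = Σ_i α_i |φ_i⟩⊗|ϕ_i⟩ be a bipartite unit vector in H⊗H with Schmidt decomposition where all α_i > 0 (so the marginals have full support on H). Let B, C_1, C_2 be Hermitian operators on H with -1 ≤ B, C_1, C_2 ≤ 1 (i.e., operator norm at most 1). If ⟨ψ| B⊗C_1 |ψ⟩ = 1 and ⟨ψ| B⊗C_2 |ψ⟩ = 1, then C_1 = C_2. -/
open Matrix
open scoped Kronecker ComplexOrder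

section helpers

variable {n : ℕ}

lemma conjTranspose_kron (A B : Matrix (Fin n) (Fin n) ℂ) :
    (A ⊗ₖ B)ᴴ = Aᴴ ⊗ₖ Bᴴ := by
  ext ⟨i, j⟩ ⟨k, l⟩
  simp [conjTranspose_apply, kroneckerMap_apply, mul_comm]

lemma psd_kron {A B : Matrix (Fin n) (Fin n) ℂ}
    (hA : A.PosSemidef) (hB : B.PosSemidef) : (A ⊗ₖ B).PosSemidef := by
  exact hA.kronecker hB

lemma kron_mulVec (B C : Matrix (Fin n) (Fin n) ℂ) (ψ : Fin n × Fin n → ℂ)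
    (p : Fin n × Fin n) :
    (B ⊗ₖ C).mulVec ψ p = (B * (of fun k l => ψ (k, l)) * Cᵀ) p.1 p.2 := by
  obtain ⟨i, j⟩ := p
  simp only [mulVec, dotProduct, Fintype.sum_prod_type, kroneckerMap_apply,
    mul_apply, transpose_apply, of_apply, Finset.mul_sum, Finset.sum_mul]
  rw [Finset.sum_comm]
  refine Finset.sum_congr rfl fun k _ => Finset.sum_congr rfl fun l _ => by ring

end helpers

/-- Lemma 2 of [CM14]: if `⟨ψ|B⊗C₁|ψ⟩ = ⟨ψ|B⊗C₂|ψ⟩ = 1` for a full-Schmidt-rank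
bipartite unit vector `ψ` and operators of norm at most 1, then `C₁ = C₂`. -/
theorem stmt_1 (n : ℕ)
    (φ ϕ : Fin n → (Fin n → ℂ))
    (hφ : ∀ i j, star (φ i) ⬝ᵥ φ j = if i = j then 1 else 0)
    (hϕ : ∀ i j, star (ϕ i) ⬝ᵥ ϕ j = if i = j then 1 else 0)
    (α : Fin n → ℝ) (hα : ∀ i, 0 < α i) (hα2 : ∑ i, (α i) ^ 2 = 1)
    (ψ : Fin n × Fin n → ℂ)
    (hψ : ψ = fun p => ∑ i, (α i : ℂ) * φ i p.1 * ϕ i p.2)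
    (B C₁ C₂ : Matrix (Fin n) (Fin n) ℂ)
    (hB : B.IsHermitian) (hC₁ : C₁.IsHermitian) (hC₂ : C₂.IsHermitian)
    (hBn : ((1 : Matrix (Fin n) (Fin n) ℂ) - B).PosSemidef ∧
           ((1 : Matrix (Fin n) (Fin n) ℂ) + B).PosSemidef)
    (hC₁n : ((1 : Matrix (Fin n) (Fin n) ℂ) - C₁).PosSemidef ∧
            ((1 : Matrix (Fin n) (Fin n) ℂ) + C₁).PosSemidef)
    (hC₂n : ((1 : Matrix (Fin n) (Fin n) ℂ) - C₂).PosSemidef ∧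
            ((1 : Matrix (Fin n) (Fin n) ℂ) + C₂).PosSemidef)
    (h1 : star ψ ⬝ᵥ ((B ⊗ₖ C₁).mulVec ψ) = 1)
    (h2 : star ψ ⬝ᵥ ((B ⊗ₖ C₂).mulVec ψ) = 1) :
    C₁ = C₂ := by
  set K : Matrix (Fin n) (Fin n) ℂ := of fun k l => ψ (k, l) with hKdef
  set Φ : Matrix (Fin n) (Fin n) ℂ := of fun k i => φ i k with hΦdef
  set Ψm : Matrix (Fin n) (Fin n) ℂ := of fun l i => ϕ i l with hΨdef
  set D : Matrix (Fin n) (Fin n) ℂ := diagonal fun i => (α i : ℂ) with hDdef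
  have hΦ1 : Φᴴ * Φ = 1 := by
    ext i j
    rw [hΦdef]
    simpa [mul_apply, conjTranspose_apply, of_apply, one_apply, dotProduct, mul_comm]
      using hφ i j
  have hΨ1 : Ψmᴴ * Ψm = 1 := by
    ext i j
    rw [hΨdef]
    simpa [mul_apply, conjTranspose_apply, of_apply, one_apply, dotProduct, mul_comm]
      using hϕ i j
  have hK : K = Φ * D * Ψmᵀ := by
    rw [Matrix.mul_assoc]
    ext k l
    rw [hKdef, hΦdef, hΨdef, hDdef]
    simp only [of_apply, hψ, Matrix.mul_apply, transpose_apply, diagonal_apply, ite_mul,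
      zero_mul, Finset.sum_ite_eq, Finset.sum_ite_eq', Finset.mem_univ, if_true]
    exact Finset.sum_congr rfl fun i _ => by ring
  have hΦu : IsUnit Φ := IsUnit.of_mul_eq_one_right _ hΦ1
  have hΨt1 : Ψmᵀ * (Ψmᴴ)ᵀ = 1 := by
    have := congrArg Matrix.transpose hΨ1
    rwa [transpose_mul, transpose_one] at this
  have hΨtu : IsUnit (Ψmᵀ) := IsUnit.of_mul_eq_one _ hΨt1
  have hDu : IsUnit D := by
    refine IsUnit.of_mul_eq_one (b := diagonal fun i => ((α i : ℂ))⁻¹) ?_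
    rw [hDdef, diagonal_mul_diagonal]
    have : (fun i => (α i : ℂ) * ((α i : ℂ))⁻¹) = fun _ => (1 : ℂ) :=
      funext fun i => mul_inv_cancel₀ (by exact_mod_cast (hα i).ne')
    rw [this, diagonal_one]
  have hKu : IsUnit K := hK ▸ ((hΦu.mul hDu).mul hΨtu)
  have hKdet : IsUnit K.det := (isUnit_iff_isUnit_det K).mp hKu
  -- norm of ψ
  have hD' : Dᴴ = D := by
    ext i j
    rw [hDdef]
    by_cases h : i = j
    · subst h; simp [conjTranspose_apply, Complex.conj_ofReal]
    · simp [conjTranspose_apply, diagonal_apply_ne, h, Ne.symm h]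
  have hth : Ψmᵀᴴ = Ψmᴴᵀ := by
    ext i j
    simp [conjTranspose_apply, transpose_apply]
  have hKK : Kᴴ * K = (Ψmᴴ)ᵀ * ((D * D) * Ψmᵀ) := by
    rw [hK, conjTranspose_mul, conjTranspose_mul, hD', hth]
    simp only [Matrix.mul_assoc]
    rw [← Matrix.mul_assoc Φᴴ Φ, hΦ1, Matrix.one_mul]
  have htrD : (D * D).trace = ∑ i, ((α i : ℂ)) ^ 2 := by
    rw [hDdef, diagonal_mul_diagonal, trace_diagonal]
    exact Finset.sum_congr rfl fun i _ => (sq _).symm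
  have hnorm : star ψ ⬝ᵥ ψ = 1 := by
    have h1' : star ψ ⬝ᵥ ψ = (Kᴴ * K).trace := by
      simp only [trace, diag_apply, Matrix.mul_apply, conjTranspose_apply, dotProduct,
        Fintype.sum_prod_type, Pi.star_apply, hKdef, of_apply]
      rw [Finset.sum_comm]
    rw [h1', hKK, ← Matrix.mul_assoc, trace_mul_comm, ← Matrix.mul_assoc, hΨt1,
      Matrix.one_mul, htrD]
    rw [← Complex.ofReal_one, ← hα2]
    push_cast
    rfl
  -- main argument for a single C
  have main : ∀ C : Matrix (Fin n) (Fin n) ℂ,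
      ((1 : Matrix (Fin n) (Fin n) ℂ) - C).PosSemidef →
      ((1 : Matrix (Fin n) (Fin n) ℂ) + C).PosSemidef →
      star ψ ⬝ᵥ ((B ⊗ₖ C).mulVec ψ) = 1 → B * K * Cᵀ = K := by
    intro C hCm hCp hC
    have expand : (1 - B) ⊗ₖ (1 + C) + (1 + B) ⊗ₖ (1 - C)
        = (1 - B ⊗ₖ C) + (1 - B ⊗ₖ C) := by
      ext p q
      obtain ⟨i, j⟩ := p
      obtain ⟨k, l⟩ := q
      simp only [kroneckerMap_apply, Matrix.sub_apply, Matrix.add_apply, Matrix.one_apply,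
        Prod.mk.injEq]
      by_cases hik : i = k <;> by_cases hjl : j = l <;> simp [hik, hjl] <;> ring
    have hpsd : ((1 - B) ⊗ₖ (1 + C) + (1 + B) ⊗ₖ (1 - C)).PosSemidef :=
      (psd_kron hBn.1 hCp).add (psd_kron hBn.2 hCm)
    have hdot : star ψ ⬝ᵥ ((1 - B) ⊗ₖ (1 + C) + (1 + B) ⊗ₖ (1 - C)) *ᵥ ψ = 0 := by
      rw [expand]
      simp only [add_mulVec, sub_mulVec, one_mulVec, dotProduct_add, dotProduct_sub,
        hnorm, hC]
      ring
    have hzero := (hpsd.dotProduct_mulVec_zero_iff ψ).mp hdot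
    rw [expand] at hzero
    have hfix : (B ⊗ₖ C) *ᵥ ψ = ψ := by
      have h2' : (2 : ℂ) • (ψ - (B ⊗ₖ C) *ᵥ ψ) = 0 := by
        rw [two_smul]
        simpa [add_mulVec, sub_mulVec, one_mulVec] using hzero
      have h3' := (smul_eq_zero.mp h2').resolve_left (by norm_num)
      have := sub_eq_zero.mp h3'
      exact this.symm
    ext i j
    have := kron_mulVec B C ψ (i, j)
    rw [hfix] at this
    exact this.symm
  have hKC₁ : B * K * C₁ᵀ = K := main C₁ hC₁n.1 hC₁n.2 h1
  have hKC₂ : B * K * C₂ᵀ = K := main C₂ hC₂n.1 hC₂n.2 h2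
  have hBu : IsUnit B := by
    refine IsUnit.of_mul_eq_one (b := K * C₁ᵀ * K⁻¹) ?_
    rw [← Matrix.mul_assoc, ← Matrix.mul_assoc, hKC₁, mul_nonsing_inv K hKdet]
  have hcancel : K * C₁ᵀ = K * C₂ᵀ := by
    apply hBu.mul_left_cancel
    rw [← Matrix.mul_assoc, ← Matrix.mul_assoc, hKC₁, hKC₂]
  have hC : C₁ᵀ = C₂ᵀ := hKu.mul_left_cancel hcancel
  exact transpose_inj.mp hC
end

section
/- Let |ψ⟩ = Σ_i α_i |φ_i⟩⊗|ϕ_i⟩ be a Schmidt decomposition of a bipartite unit vector with all α_i > 0, and let A and B be unitary (or more generally norm-1 Hermitian) operators with (A⊗1)|ψ⟩ = (1⊗B)|ψ⟩. Then for every Schmidt coefficient value α, the subspace H_α = span{|φ_i⟩ : α_i = α} is invariant under A: A·H_α = H_α. -/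
open Matrix
open scoped Kronecker

lemma ortho_complete {n : ℕ} (φ : Fin n → (Fin n → ℂ))
    (hφ : ∀ i j, star (φ i) ⬝ᵥ φ j = if i = j then 1 else 0) (x y : Fin n) :
    ∑ i, (starRingEnd ℂ) (φ i x) * φ i y = if x = y then 1 else 0 := by
  let Q : Matrix (Fin n) (Fin n) ℂ := Matrix.of fun i x => φ i x
  have h1 : Q * Qᴴ = 1 := by
    ext i j
    have h := hφ j i
    simp only [dotProduct, Pi.star_apply, RCLike.star_def] at h
    simp only [Matrix.mul_apply, Matrix.conjTranspose_apply, Matrix.of_apply, Q,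
      Matrix.one_apply, RCLike.star_def]
    rw [show (∑ k, φ i k * (starRingEnd ℂ) (φ j k)) = ∑ k, (starRingEnd ℂ) (φ j k) * φ i k by
      exact Finset.sum_congr rfl fun k _ => mul_comm _ _, h]
    simp [eq_comm]
  have h2 : Qᴴ * Q = 1 := mul_eq_one_comm.mp h1
  have := congrFun (congrFun h2 x) y
  simpa [Matrix.mul_apply, Matrix.conjTranspose_apply, Matrix.one_apply, Q] using this

lemma ortho_complete' {n : ℕ} (φ : Fin n → (Fin n → ℂ))
    (hφ : ∀ i j, star (φ i) ⬝ᵥ φ j = if i = j then 1 else 0) (x y : Fin n) :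
    ∑ i, φ i x * (starRingEnd ℂ) (φ i y) = if x = y then 1 else 0 := by
  have h := congrArg (starRingEnd ℂ) (ortho_complete φ hφ x y)
  rw [map_sum] at h
  simpa [apply_ite (starRingEnd ℂ)] using h

lemma ortho_expand {n : ℕ} (φ : Fin n → (Fin n → ℂ))
    (hφ : ∀ i j, star (φ i) ⬝ᵥ φ j = if i = j then 1 else 0) (v : Fin n → ℂ) :
    v = ∑ i, (star (φ i) ⬝ᵥ v) • φ i := by
  funext x
  simp only [Finset.sum_apply, Pi.smul_apply, smul_eq_mul, dotProduct, Pi.star_apply]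
  calc v x = ∑ y, (if x = y then (1:ℂ) else 0) * v y := by simp
    _ = ∑ y, (∑ i, φ i x * (starRingEnd ℂ) (φ i y)) * v y := by
        refine Finset.sum_congr rfl fun y _ => by rw [ortho_complete' φ hφ]
    _ = ∑ y, ∑ i, (φ i x * (starRingEnd ℂ) (φ i y)) * v y := by
        simp [Finset.sum_mul]
    _ = ∑ i, ∑ y, (φ i x * (starRingEnd ℂ) (φ i y)) * v y := by rw [Finset.sum_comm]
    _ = ∑ i, (∑ y, star (φ i y) * v y) * φ i x := by
        refine Finset.sum_congr rfl fun i _ => ?_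
        rw [Finset.sum_mul]
        refine Finset.sum_congr rfl fun y _ => by simp [RCLike.star_def]; ring

lemma unitary_preserve {n : ℕ} (B : Matrix (Fin n) (Fin n) ℂ)
    (hB : B ∈ Matrix.unitaryGroup (Fin n) ℂ) (v w : Fin n → ℂ) :
    star (B.mulVec v) ⬝ᵥ B.mulVec w = star v ⬝ᵥ w := by
  rw [Matrix.star_mulVec, Matrix.dotProduct_mulVec, Matrix.vecMul_vecMul]
  have : Bᴴ * B = 1 := Matrix.mem_unitaryGroup_iff'.mp hB
  rw [this]
  simp

lemma collapse {n : ℕ} (c d : Fin n → ℂ) (F G : Fin n → Fin n → ℂ) (δf : Fin n → ℂ)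
    (hG : ∀ j, ∑ y, d y * G j y = δf j) :
    ∑ x, ∑ y, (c x * d y) * (∑ j, F j x * G j y) = ∑ j, δf j * (∑ x, c x * F j x) := by
  have h : ∀ x, ∑ y, (c x * d y) * (∑ j, F j x * G j y)
      = ∑ j, (c x * F j x) * δf j := by
    intro x
    calc ∑ y, (c x * d y) * (∑ j, F j x * G j y)
        = ∑ y, ∑ j, (c x * F j x) * (d y * G j y) := by
          refine Finset.sum_congr rfl fun y _ => ?_
          rw [Finset.mul_sum]
          exact Finset.sum_congr rfl fun j _ => by ring
      _ = ∑ j, ∑ y, (c x * F j x) * (d y * G j y) := by rw [Finset.sum_comm]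
      _ = ∑ j, (c x * F j x) * δf j := by
          refine Finset.sum_congr rfl fun j _ => ?_
          rw [← Finset.mul_sum, hG j]
  rw [Finset.sum_congr rfl fun x _ => h x, Finset.sum_comm]
  refine Finset.sum_congr rfl fun j _ => ?_
  rw [← Finset.sum_mul, mul_comm]

/-- columns of the matrix of coefficients of a unitary w.r.t. an orthonormal family
are orthonormal. -/
lemma col_ortho {n : ℕ} (ϕ : Fin n → (Fin n → ℂ))
    (hϕ : ∀ i j, star (ϕ i) ⬝ᵥ ϕ j = if i = j then 1 else 0)
    (B : Matrix (Fin n) (Fin n) ℂ) (hB : B ∈ Matrix.unitaryGroup (Fin n) ℂ) (i j : Fin n) :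
    ∑ k, star (star (ϕ k) ⬝ᵥ B.mulVec (ϕ i)) * (star (ϕ k) ⬝ᵥ B.mulVec (ϕ j))
      = if i = j then 1 else 0 := by
  have key : ∀ k, star (star (ϕ k) ⬝ᵥ B.mulVec (ϕ i)) * (star (ϕ k) ⬝ᵥ B.mulVec (ϕ j))
      = ∑ x, ∑ y, (ϕ k x * (starRingEnd ℂ) ((B.mulVec (ϕ i)) x))
          * ((starRingEnd ℂ) (ϕ k y) * (B.mulVec (ϕ j)) y) := by
    intro k
    rw [dotProduct, dotProduct, star_sum, Finset.sum_mul_sum]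
    refine Finset.sum_congr rfl fun x _ => Finset.sum_congr rfl fun y _ => ?_
    simp [RCLike.star_def, mul_comm]
  calc ∑ k, star (star (ϕ k) ⬝ᵥ B.mulVec (ϕ i)) * (star (ϕ k) ⬝ᵥ B.mulVec (ϕ j))
      = ∑ k, ∑ x, ∑ y, (ϕ k x * (starRingEnd ℂ) ((B.mulVec (ϕ i)) x))
          * ((starRingEnd ℂ) (ϕ k y) * (B.mulVec (ϕ j)) y) :=
        Finset.sum_congr rfl fun k _ => key k
    _ = ∑ x, ∑ y, ∑ k, (ϕ k x * (starRingEnd ℂ) (ϕ k y))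
          * ((starRingEnd ℂ) ((B.mulVec (ϕ i)) x) * (B.mulVec (ϕ j)) y) := by
        rw [Finset.sum_comm]
        refine Finset.sum_congr rfl fun x _ => ?_
        rw [Finset.sum_comm]
        exact Finset.sum_congr rfl fun y _ => Finset.sum_congr rfl fun k _ => by ring
    _ = ∑ x, ∑ y, (if x = y then (1:ℂ) else 0)
          * ((starRingEnd ℂ) ((B.mulVec (ϕ i)) x) * (B.mulVec (ϕ j)) y) := by
        refine Finset.sum_congr rfl fun x _ => Finset.sum_congr rfl fun y _ => ?_
        rw [← Finset.sum_mul, ortho_complete' ϕ hϕ]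
    _ = ∑ x, (starRingEnd ℂ) ((B.mulVec (ϕ i)) x) * (B.mulVec (ϕ j)) x := by
        refine Finset.sum_congr rfl fun x _ => ?_
        simp [ite_mul]
    _ = star (B.mulVec (ϕ i)) ⬝ᵥ B.mulVec (ϕ j) := by
        simp [dotProduct, RCLike.star_def]
    _ = if i = j then 1 else 0 := by rw [unitary_preserve B hB, hϕ]

/-- If unitaries `A`, `B` satisfy `(A⊗1)|ψ⟩ = (1⊗B)|ψ⟩` for a Schmidt
decomposition `ψ = Σ αᵢ φᵢ⊗ϕᵢ` with all `αᵢ > 0`, then each Schmidt subspace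
`H_α = span{φᵢ : αᵢ = α}` is invariant under `A`. -/
theorem stmt_13 (n : ℕ)
    (φ ϕ : Fin n → (Fin n → ℂ))
    (hφ : ∀ i j, star (φ i) ⬝ᵥ φ j = if i = j then 1 else 0)
    (hϕ : ∀ i j, star (ϕ i) ⬝ᵥ ϕ j = if i = j then 1 else 0)
    (α : Fin n → ℝ) (hα : ∀ i, 0 < α i) (hα2 : ∑ i, (α i) ^ 2 = 1)
    (ψ : Fin n × Fin n → ℂ)
    (hψ : ψ = fun p => ∑ i, (α i : ℂ) * φ i p.1 * ϕ i p.2)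
    (A B : Matrix (Fin n) (Fin n) ℂ)
    (hA : A ∈ Matrix.unitaryGroup (Fin n) ℂ)
    (hB : B ∈ Matrix.unitaryGroup (Fin n) ℂ)
    (hint : (A ⊗ₖ (1 : Matrix (Fin n) (Fin n) ℂ)).mulVec ψ =
      ((1 : Matrix (Fin n) (Fin n) ℂ) ⊗ₖ B).mulVec ψ) :
    ∀ a : ℝ,
      Submodule.map A.mulVecLin
          (Submodule.span ℂ {v : Fin n → ℂ | ∃ i, α i = a ∧ v = φ i}) =
        Submodule.span ℂ {v : Fin n → ℂ | ∃ i, α i = a ∧ v = φ i} := by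
  intro t
  set a : Fin n → Fin n → ℂ := fun i j => star (φ i) ⬝ᵥ A.mulVec (φ j) with ha
  set b : Fin n → Fin n → ℂ := fun i j => star (ϕ i) ⬝ᵥ B.mulVec (ϕ j) with hb
  -- pointwise evaluation of the two sides of hint
  have hL : ∀ x y : Fin n, ((A ⊗ₖ (1 : Matrix (Fin n) (Fin n) ℂ)).mulVec ψ) (x,y)
      = ∑ j, (α j : ℂ) * (A.mulVec (φ j)) x * ϕ j y := by
    intro x y
    simp only [Matrix.mulVec, dotProduct, Fintype.sum_prod_type, Matrix.kroneckerMap_apply,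
      Matrix.one_apply, hψ, mul_ite, mul_one, mul_zero, ite_mul, zero_mul]
    simp only [Finset.sum_ite_eq, Finset.mem_univ, if_true, Finset.mul_sum, Finset.sum_mul]
    rw [Finset.sum_comm]
    exact Finset.sum_congr rfl fun j _ => Finset.sum_congr rfl fun x' _ => by ring
  have hR : ∀ x y : Fin n, (((1 : Matrix (Fin n) (Fin n) ℂ) ⊗ₖ B).mulVec ψ) (x,y)
      = ∑ j, (α j : ℂ) * φ j x * (B.mulVec (ϕ j)) y := by
    intro x y
    simp only [Matrix.mulVec, dotProduct, Fintype.sum_prod_type, Matrix.kroneckerMap_apply,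
      Matrix.one_apply, ite_mul, one_mul, zero_mul]
    rw [Finset.sum_comm]
    simp only [Finset.sum_ite_eq, Finset.mem_univ, if_true, hψ]
    simp only [Finset.mul_sum, Finset.sum_mul]
    rw [Finset.sum_comm]
    exact Finset.sum_congr rfl fun j _ => Finset.sum_congr rfl fun y' _ => by ring
  -- the key intertwining relation on matrix elements
  have key : ∀ i k, (α k : ℂ) * a i k = (α i : ℂ) * b k i := by
    intro i k
    have hLsum : ∑ x, ∑ y, (star (φ i x) * star (ϕ k y))
        * (((A ⊗ₖ (1 : Matrix (Fin n) (Fin n) ℂ)).mulVec ψ) (x,y))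
        = (α k : ℂ) * a i k := by
      calc ∑ x, ∑ y, (star (φ i x) * star (ϕ k y))
            * (((A ⊗ₖ (1 : Matrix (Fin n) (Fin n) ℂ)).mulVec ψ) (x,y))
          = ∑ x, ∑ y, (star (φ i x) * star (ϕ k y))
            * (∑ j, ((α j : ℂ) * (A.mulVec (φ j)) x) * ϕ j y) := by
            refine Finset.sum_congr rfl fun x _ => Finset.sum_congr rfl fun y _ => ?_
            rw [hL x y]
        _ = ∑ j, (if k = j then (1:ℂ) else 0)
            * (∑ x, star (φ i x) * ((α j : ℂ) * (A.mulVec (φ j)) x)) := by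
            refine collapse _ _ _ _ _ fun j => ?_
            have := hϕ k j
            simpa [dotProduct] using this
        _ = (α k : ℂ) * a i k := by
            simp only [ite_mul, zero_mul, one_mul, Finset.sum_ite_eq, Finset.mem_univ, if_true]
            rw [ha]
            simp only [dotProduct, Pi.star_apply, Finset.mul_sum]
            exact Finset.sum_congr rfl fun x _ => by ring
    have hRsum : ∑ x, ∑ y, (star (φ i x) * star (ϕ k y))
        * ((((1 : Matrix (Fin n) (Fin n) ℂ) ⊗ₖ B).mulVec ψ) (x,y))
        = (α i : ℂ) * b k i := by
      calc ∑ x, ∑ y, (star (φ i x) * star (ϕ k y))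
            * ((((1 : Matrix (Fin n) (Fin n) ℂ) ⊗ₖ B).mulVec ψ) (x,y))
          = ∑ y, ∑ x, (star (ϕ k y) * star (φ i x))
            * (∑ j, ((α j : ℂ) * (B.mulVec (ϕ j)) y) * φ j x) := by
            rw [Finset.sum_comm]
            refine Finset.sum_congr rfl fun y _ => Finset.sum_congr rfl fun x _ => ?_
            rw [hR x y]
            rw [show star (ϕ k y) * star (φ i x) = star (φ i x) * star (ϕ k y) from mul_comm _ _]
            congr 1
            exact Finset.sum_congr rfl fun j _ => by ring
        _ = ∑ j, (if i = j then (1:ℂ) else 0)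
            * (∑ y, star (ϕ k y) * ((α j : ℂ) * (B.mulVec (ϕ j)) y)) := by
            refine collapse _ _ _ _ _ fun j => ?_
            have := hφ i j
            simpa [dotProduct] using this
        _ = (α i : ℂ) * b k i := by
            simp only [ite_mul, zero_mul, one_mul, Finset.sum_ite_eq, Finset.mem_univ, if_true]
            rw [hb]
            simp only [dotProduct, Pi.star_apply, Finset.mul_sum]
            exact Finset.sum_congr rfl fun y _ => by ring
    rw [← hLsum, ← hRsum, hint]
  -- matrix reformulation
  set MA : Matrix (Fin n) (Fin n) ℂ := Matrix.of a with hMA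
  set D : Matrix (Fin n) (Fin n) ℂ := Matrix.diagonal (fun i => ((α i : ℂ))^2) with hD
  have hMA1 : MAᴴ * MA = 1 := by
    ext i j
    have := col_ortho φ hφ A hA i j
    simpa [Matrix.mul_apply, Matrix.conjTranspose_apply, Matrix.one_apply, hMA, ha] using this
  have hMDM : MA * D * MAᴴ = D := by
    ext i j
    rw [Matrix.mul_apply]
    have step : ∀ k, (MA * D) i k * MAᴴ k j
        = ((α i : ℂ) * (α j : ℂ)) * (star (b k j) * b k i) := by
      intro k
      rw [Matrix.mul_diagonal, Matrix.conjTranspose_apply]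
      have h1 : (α k : ℂ) * a i k = (α i : ℂ) * b k i := key i k
      have h2 : (α k : ℂ) * star (a j k) = (α j : ℂ) * star (b k j) := by
        have := congrArg star (key j k)
        simpa [star_mul', Complex.conj_ofReal, mul_comm] using this
      calc MA i k * ((α k : ℂ))^2 * star (a j k)
          = ((α k : ℂ) * a i k) * ((α k : ℂ) * star (a j k)) := by
            simp only [hMA, Matrix.of_apply]; ring
        _ = ((α i : ℂ) * b k i) * ((α j : ℂ) * star (b k j)) := by rw [h1, h2]
        _ = ((α i : ℂ) * (α j : ℂ)) * (star (b k j) * b k i) := by ring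
    rw [Finset.sum_congr rfl fun k _ => step k, ← Finset.mul_sum]
    have := col_ortho ϕ hϕ B hB j i
    rw [show (∑ k, star (b k j) * b k i) = if j = i then 1 else 0 by
      simpa [hb] using this]
    by_cases hij : i = j
    · subst hij; simp [hD]; ring
    · simp [hD, Matrix.diagonal_apply, hij, Ne.symm hij]
  have hcomm : MA * D = D * MA := by
    calc MA * D = MA * D * (MAᴴ * MA) := by rw [hMA1, mul_one]
      _ = (MA * D * MAᴴ) * MA := by rw [← mul_assoc]
      _ = D * MA := by rw [hMDM]
  -- vanishing of off-block matrix elements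
  have hvanish : ∀ i j, α i ≠ α j → a i j = 0 := by
    intro i j hne
    have h := congrFun (congrFun hcomm i) j
    rw [Matrix.mul_diagonal, Matrix.diagonal_mul] at h
    by_contra hne0
    have hsq : ((α j : ℂ))^2 = ((α i : ℂ))^2 := by
      have : ((α j : ℂ))^2 * a i j = ((α i : ℂ))^2 * a i j := by
        rw [mul_comm] at h; exact h
      exact mul_right_cancel₀ (by simpa [hMA] using hne0) this
    have hsqr : (α j)^2 = (α i)^2 := by exact_mod_cast hsq
    have : α i = α j := by nlinarith [hα i, hα j]
    exact hne this
  have hvanishAdj : ∀ i j, α i ≠ α j → star (φ i) ⬝ᵥ Aᴴ.mulVec (φ j) = 0 := by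
    intro i j hne
    have hadj : star (φ i) ⬝ᵥ Aᴴ.mulVec (φ j) = star (a j i) := by
      rw [ha]
      simp only [dotProduct, Matrix.mulVec, Pi.star_apply, Matrix.conjTranspose_apply,
        star_sum, star_mul', Finset.mul_sum, dotProduct, RCLike.star_def]
      rw [Finset.sum_comm]
      refine Finset.sum_congr rfl fun x _ => Finset.sum_congr rfl fun y _ => ?_
      simp only [_root_.map_mul, RingHomCompTriple.comp_apply, RingHom.id_apply,
        starRingEnd_self_apply]
      ring
    rw [hadj, hvanish j i (fun h => hne h.symm), star_zero]
  -- membership lemma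
  have hmem : ∀ (M : Matrix (Fin n) (Fin n) ℂ),
      (∀ i j, α i ≠ α j → star (φ i) ⬝ᵥ M.mulVec (φ j) = 0) →
      ∀ k, α k = t → M.mulVec (φ k) ∈
        Submodule.span ℂ {v : Fin n → ℂ | ∃ i, α i = t ∧ v = φ i} := by
    intro M hvan k hk
    rw [ortho_expand φ hφ (M.mulVec (φ k))]
    refine Submodule.sum_mem _ fun i _ => ?_
    by_cases h : α i = t
    · exact Submodule.smul_mem _ _ (Submodule.subset_span ⟨i, h, rfl⟩)
    · rw [hvan i k (by rw [hk]; exact h), zero_smul]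
      exact Submodule.zero_mem _
  have hvanA : ∀ i j, α i ≠ α j → star (φ i) ⬝ᵥ A.mulVec (φ j) = 0 := by
    intro i j hne
    have := hvanish i j hne
    rw [ha] at this
    exact this
  apply le_antisymm
  · rw [Submodule.map_span, Submodule.span_le]
    rintro _ ⟨v, ⟨k, hk, rfl⟩, rfl⟩
    have : A.mulVecLin (φ k) = A.mulVec (φ k) := Matrix.mulVecLin_apply A (φ k)
    rw [SetLike.mem_coe, this]
    exact hmem A hvanA k hk
  · rw [Submodule.span_le]
    rintro _ ⟨k, hk, rfl⟩
    refine ⟨Aᴴ.mulVec (φ k), hmem Aᴴ hvanishAdj k hk, ?_⟩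
    have hA1 : A * Aᴴ = 1 := by
      have := Matrix.mem_unitaryGroup_iff.mp hA
      simpa [Matrix.star_eq_conjTranspose] using this
    rw [Matrix.mulVecLin_apply, Matrix.mulVec_mulVec, hA1, Matrix.one_mulVec]
end
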